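/- arXiv:1511.02576 — 6 statements merged into one kernel-verified Lean document; each statement's English description precedes it below -/
import Mathlib

section
/- Let d ≥ 1 and let U be a unitary d×d complex matrix. Then U D Uᴴ is diagonal for every diagonal density matrix D (i.e., U is a unitary incoherent operation) if and only if there exist a permutation σ of {0,…,d−1} and complex numbers c_0,…,c_{d−1} of modulus 1 such that U has entries U_{ij} = c_j if i = σ(j) and U_{ij} = 0 otherwise (i.e., U is a generalized permutation matrix with unimodular entries). -/
open Matrix BigOperators
open scoped ComplexOrder

noncomputable section

/-- A density matrix on ℂ^d: positive semidefinite with trace 1. -/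
def IsDensityMatrix {d : ℕ} (ρ : Matrix (Fin d) (Fin d) ℂ) : Prop :=
  ρ.PosSemidef ∧ ρ.trace = 1

/-- An incoherent Kraus family: completeness relation plus each Kraus operator
maps diagonal density matrices to diagonal matrices. -/
def IsIncoherentKraus {d : ℕ} {ι : Type} [Fintype ι]
    (K : ι → Matrix (Fin d) (Fin d) ℂ) : Prop :=
  (∑ n, (K n)ᴴ * K n = 1) ∧
  ∀ D : Matrix (Fin d) (Fin d) ℂ, IsDensityMatrix D → D.IsDiag →
    ∀ n, ((K n) * D * (K n)ᴴ).IsDiag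

/-- A unitary incoherent matrix: unitary and U D Uᴴ diagonal for every diagonal
density matrix D. -/
def IsUnitaryIncoherent {d : ℕ} (U : Matrix (Fin d) (Fin d) ℂ) : Prop :=
  U * Uᴴ = 1 ∧ Uᴴ * U = 1 ∧
  ∀ D : Matrix (Fin d) (Fin d) ℂ, IsDensityMatrix D → D.IsDiag → (U * D * Uᴴ).IsDiag

/-- S_MCS: rank-one projections onto unit vectors whose coordinates all have
modulus 1/√d. -/
def InSMCS {d : ℕ} (ρ : Matrix (Fin d) (Fin d) ℂ) : Prop :=
  ∃ ψ : Fin d → ℂ, (∑ j, ‖ψ j‖ ^ 2 = 1) ∧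
    (∀ j, ‖ψ j‖ = 1 / Real.sqrt d) ∧
    ρ = Matrix.vecMulVec ψ (star ψ)

/-- A valid coherence measure: (C1) nonnegativity and vanishing exactly on diagonal
(incoherent) states; (C2) monotonicity under incoherent operations; (C3) monotonicity
on average under subselection; (C4) convexity. -/
def IsValidCoherenceMeasure {d : ℕ} (C : Matrix (Fin d) (Fin d) ℂ → ℝ) : Prop :=
  (∀ ρ, IsDensityMatrix ρ → 0 ≤ C ρ) ∧
  (∀ ρ, IsDensityMatrix ρ → (C ρ = 0 ↔ ρ.IsDiag)) ∧
  (∀ ρ, IsDensityMatrix ρ → ∀ (N : ℕ) (K : Fin N → Matrix (Fin d) (Fin d) ℂ),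
    IsIncoherentKraus K → C (∑ n, K n * ρ * (K n)ᴴ) ≤ C ρ) ∧
  (∀ ρ, IsDensityMatrix ρ → ∀ (N : ℕ) (K : Fin N → Matrix (Fin d) (Fin d) ℂ),
    IsIncoherentKraus K →
    ∑ n ∈ Finset.univ.filter
        (fun n => 0 < (Matrix.trace (K n * ρ * (K n)ᴴ)).re),
      (Matrix.trace (K n * ρ * (K n)ᴴ)).re *
        C ((((Matrix.trace (K n * ρ * (K n)ᴴ)).re : ℂ))⁻¹ • (K n * ρ * (K n)ᴴ)) ≤ C ρ) ∧
  (∀ (M : ℕ) (q : Fin M → ℝ) (ρs : Fin M → Matrix (Fin d) (Fin d) ℂ),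
    (∀ k, 0 ≤ q k) → (∑ k, q k = 1) → (∀ k, IsDensityMatrix (ρs k)) →
    C (∑ k, (q k : ℂ) • ρs k) ≤ ∑ k, q k * C (ρs k))

/-! An incoherent unitary sends each basis projection `|j⟩⟨j|` to the rank-one matrix
`U|j⟩⟨j|Uᴴ`, whose off-diagonal entries are `U i j * conj (U k j)`; so each column of `U`
has at most one nonzero entry. Orthonormality of the columns then makes this entry
unimodular and its row index an injective, hence bijective, function of the column.
Conversely, a generalized permutation matrix is a reindexed diagonal matrix, and
conjugation by it permutes the diagonal. -/

namespace Matrix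

variable {n α : Type*} [Fintype n]

theorem mul_diagonal_single_mul_conjTranspose_apply [DecidableEq n] [Semiring α] [StarRing α]
    (U : Matrix n n α) (j i k : n) :
    (U * diagonal (Pi.single j (1 : α)) * Uᴴ) i k = U i j * star (U k j) := by
  rw [mul_apply, Finset.sum_eq_single j]
  · simp [mul_diagonal]
  · intro l _ hl
    simp [mul_diagonal, hl]
  · simp

theorem isDiag_mul_mul_conjTranspose_of_eq_ite [DecidableEq n] [Semiring α] [StarRing α]
    {U D : Matrix n n α} {σ : Equiv.Perm n} {c : n → α}
    (hU : ∀ i j, U i j = if i = σ j then c j else 0) (hD : D.IsDiag) :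
    (U * D * Uᴴ).IsDiag := by
  have hU' : U = (diagonal c).submatrix σ.symm id := by
    ext i j
    by_cases h : i = σ j <;> simp [hU, h, Equiv.symm_apply_eq]
  obtain ⟨v, rfl⟩ : ∃ v, D = diagonal v := ⟨_, hD.diagonal_diag.symm⟩
  rw [hU', conjTranspose_submatrix, ← submatrix_id_id (diagonal v),
    ← submatrix_mul _ _ _ _ _ Function.bijective_id,
    ← submatrix_mul _ _ _ _ _ Function.bijective_id, diagonal_conjTranspose,
    diagonal_mul_diagonal, diagonal_mul_diagonal]
  exact (isDiag_diagonal _).submatrix σ.symm.injective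

theorem conjTranspose_mul_self_apply_of_eq_zero [NonUnitalNonAssocSemiring α] [StarRing α]
    {U : Matrix n n α} {f : n → n} (hf : ∀ j i, i ≠ f j → U i j = 0) (j j' : n) :
    (Uᴴ * U) j j' = star (U (f j) j) * U (f j) j' := by
  rw [mul_apply, Finset.sum_eq_single (f j)]
  · rfl
  · intro i _ hi
    simp [hf j i hi]
  · simp

theorem exists_perm_eq_ite_of_conjTranspose_mul_self_eq_one [DecidableEq n] {𝕜 : Type*}
    [RCLike 𝕜] {U : Matrix n n 𝕜} (hU : Uᴴ * U = 1)
    (hcol : ∀ j i k, i ≠ k → U i j * star (U k j) = 0) :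
    ∃ (σ : Equiv.Perm n) (c : n → 𝕜), (∀ j, ‖c j‖ = 1) ∧
      ∀ i j, U i j = if i = σ j then c j else 0 := by
  have hex (j : n) : ∃ i, U i j ≠ 0 := by
    by_contra! h
    simpa [mul_apply, h] using congrFun (congrFun hU j) j
  choose f hf using hex
  have hzero (j i : n) (hi : i ≠ f j) : U i j = 0 :=
    (mul_eq_zero.mp (hcol j i (f j) hi)).resolve_right (star_ne_zero.mpr (hf j))
  have hUf := conjTranspose_mul_self_apply_of_eq_zero hzero
  have hinj : f.Injective := fun j j' h ↦ by
    by_contra hne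
    have := hUf j j'
    rw [hU, one_apply_ne hne] at this
    exact mul_ne_zero (star_ne_zero.mpr (hf j)) (h ▸ hf j') this.symm
  have hnorm (j : n) : ‖U (f j) j‖ = 1 := by
    have := hUf j j
    rw [hU, one_apply_eq, RCLike.star_def, RCLike.conj_mul] at this
    exact (pow_eq_one_iff_of_nonneg (norm_nonneg _) two_ne_zero).mp (mod_cast this.symm)
  refine ⟨Equiv.ofBijective f hinj.bijective_of_finite, fun j ↦ U (f j) j, hnorm,
    fun i j ↦ ?_⟩
  split_ifs with h
  · rw [h]
    rfl
  · exact hzero j i h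

end Matrix

theorem isDensityMatrix_diagonal_single {d : ℕ} (j : Fin d) :
    IsDensityMatrix (diagonal (Pi.single j (1 : ℂ))) :=
  ⟨posSemidef_diagonal_iff.mpr (Pi.single_nonneg.mpr zero_le_one), by simp [trace_diagonal]⟩

theorem mul_star_eq_zero_of_forall_isDiag {d : ℕ} {U : Matrix (Fin d) (Fin d) ℂ}
    (h : ∀ D : Matrix (Fin d) (Fin d) ℂ, IsDensityMatrix D → D.IsDiag →
      (U * D * Uᴴ).IsDiag)
    (j i k : Fin d) (hik : i ≠ k) : U i j * star (U k j) = 0 := by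
  rw [← mul_diagonal_single_mul_conjTranspose_apply]
  exact h _ (isDensityMatrix_diagonal_single j) (isDiag_diagonal _) hik

theorem unitary_incoherent_iff_generalized_permutation_general
    {d : ℕ} (U : Matrix (Fin d) (Fin d) ℂ)
    (hU : U * Uᴴ = 1 ∧ Uᴴ * U = 1) :
    (∀ D : Matrix (Fin d) (Fin d) ℂ, IsDensityMatrix D → D.IsDiag →
        (U * D * Uᴴ).IsDiag)
    ↔ ∃ (σ : Equiv.Perm (Fin d)) (c : Fin d → ℂ),
        (∀ j, ‖c j‖ = 1) ∧
        ∀ i j, U i j = if i = σ j then c j else 0 := by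
  constructor
  · intro h
    exact exists_perm_eq_ite_of_conjTranspose_mul_self_eq_one hU.2
      (mul_star_eq_zero_of_forall_isDiag h)
  · rintro ⟨σ, c, -, hUσ⟩ D - hD
    exact isDiag_mul_mul_conjTranspose_of_eq_ite hUσ hD

/-- a unitary U is incoherent iff it is a generalized permutation
matrix with unimodular entries. -/
theorem unitary_incoherent_iff_generalized_permutation
    {d : ℕ} (hd : 1 ≤ d) (U : Matrix (Fin d) (Fin d) ℂ)
    (hU : U * Uᴴ = 1 ∧ Uᴴ * U = 1) :
    (∀ D : Matrix (Fin d) (Fin d) ℂ, IsDensityMatrix D → D.IsDiag →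
        (U * D * Uᴴ).IsDiag)
    ↔ ∃ (σ : Equiv.Perm (Fin d)) (c : Fin d → ℂ),
        (∀ j, ‖c j‖ = 1) ∧
        ∀ i j, U i j = if i = σ j then c j else 0 :=
  unitary_incoherent_iff_generalized_permutation_general U hU
end
end

section
/- Let C be a valid coherence measure on d×d density matrices. Then every state of S_MCS attains the maximum value of C: for every ρ ∈ S_MCS and every density matrix σ on ℂ^d, C(σ) ≤ C(ρ); moreover C takes the same value on all states of S_MCS. -/
open Matrix BigOperators
open scoped ComplexOrder

noncomputable section

/-!
A maximally coherent state `ψ` can be converted into any pure state `φ` by an incoherent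
operation: the Kraus operators `K n = √d ∑ᵢ φᵢ ψ̄_{i+n} |i⟩⟨i+n|` each send `ψ` to `φ / √d`
(because `|ψₖ|² = 1 / d`), and the `d` cyclic shifts `k ↦ k + n` make the family complete.
So by monotonicity (C2) every pure state is at most as coherent as `ψψᴴ`. A general state is a
convex combination of pure states (its spectral decomposition), so convexity (C4) extends the
bound to all states. Applying this to two maximally coherent states in both orders shows that
they have the same coherence.
-/

namespace Matrix.IsHermitian

variable {𝕜 n : Type*} [RCLike 𝕜] [Fintype n] [DecidableEq n] {A : Matrix n n 𝕜}

theorem eq_sum_eigenvalues_smul_vecMulVec (hA : A.IsHermitian) :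
    A = ∑ k, (hA.eigenvalues k : 𝕜) •
      vecMulVec ⇑(hA.eigenvectorBasis k) (star ⇑(hA.eigenvectorBasis k)) := by
  conv_lhs => rw [hA.spectral_theorem, Unitary.conjStarAlgAut_apply]
  ext i j
  simp only [mul_apply, sum_apply, smul_apply, diagonal_apply, star_apply, vecMulVec_apply,
    Pi.star_apply, mul_ite, mul_zero, Finset.sum_ite_eq', Finset.mem_univ, if_true]
  refine Finset.sum_congr rfl fun k _ => ?_
  rw [eigenvectorUnitary_apply, eigenvectorUnitary_apply, Function.comp_apply, smul_eq_mul]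
  ring

theorem sum_norm_sq_eigenvectorBasis (hA : A.IsHermitian) (k : n) :
    ∑ i, ‖hA.eigenvectorBasis k i‖ ^ 2 = 1 := by
  rw [← EuclideanSpace.norm_sq_eq, (hA.eigenvectorBasis.orthonormal).1 k, one_pow]

end Matrix.IsHermitian

theorem Matrix.mul_vecMulVec_star_mul_conjTranspose {m n α : Type*} [Fintype n] [CommSemiring α]
    [StarRing α] (K : Matrix m n α) (v : n → α) :
    K * vecMulVec v (star v) * Kᴴ = vecMulVec (K *ᵥ v) (star (K *ᵥ v)) := by
  rw [mul_vecMulVec, vecMulVec_mul, vecMul_conjTranspose, star_star]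

theorem isDensityMatrix_vecMulVec_star {d : ℕ} {ψ : Fin d → ℂ} (hψ : ∑ j, ‖ψ j‖ ^ 2 = 1) :
    IsDensityMatrix (vecMulVec ψ (star ψ)) := by
  refine ⟨posSemidef_vecMulVec_self_star ψ, ?_⟩
  simp only [trace, diag_apply, vecMulVec_apply, Pi.star_apply, Complex.star_def,
    Complex.mul_conj']
  exact_mod_cast hψ

theorem InSMCS.isDensityMatrix {d : ℕ} {ρ : Matrix (Fin d) (Fin d) ℂ} (hρ : InSMCS ρ) :
    IsDensityMatrix ρ := by
  obtain ⟨ψ, hψ, -, rfl⟩ := hρ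
  exact isDensityMatrix_vecMulVec_star hψ

theorem ofReal_sqrt_natCast_mul_self (d : ℕ) : (√d : ℂ) * √d = d := by
  exact_mod_cast Real.mul_self_sqrt d.cast_nonneg

section MaximallyCoherent

variable {d : ℕ} {ψ φ : Fin d → ℂ}

theorem star_mul_self_eq_inv_of_norm_eq (hψ : ∀ j, ‖ψ j‖ = 1 / √d) (j : Fin d) :
    star (ψ j) * ψ j = (d : ℂ)⁻¹ := by
  rw [Complex.star_def, Complex.conj_mul', hψ j, one_div, Complex.ofReal_inv, inv_pow,
    ← Complex.ofReal_pow, Real.sq_sqrt d.cast_nonneg, Complex.ofReal_natCast]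

def mcsKraus (ψ φ : Fin d → ℂ) (n : Fin d) : Matrix (Fin d) (Fin d) ℂ :=
  of fun i k => if i + n = k then (√d : ℂ) * φ i * star (ψ k) else 0

theorem mcsKraus_mulVec (hψ : ∀ j, ‖ψ j‖ = 1 / √d) (n : Fin d) :
    mcsKraus ψ φ n *ᵥ ψ = (√d : ℂ)⁻¹ • φ := by
  ext i
  have hs : (√d : ℂ) ≠ 0 := by
    exact_mod_cast (Real.sqrt_pos.2 (Nat.cast_pos.2 (Fin.pos i))).ne'
  simp only [mcsKraus, mulVec, dotProduct, of_apply, ite_mul, zero_mul, Finset.sum_ite_eq,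
    Finset.mem_univ, if_true, mul_assoc, star_mul_self_eq_inv_of_norm_eq hψ, Pi.smul_apply,
    smul_eq_mul]
  rw [← ofReal_sqrt_natCast_mul_self]
  field_simp

theorem sum_mcsKraus_conj_vecMulVec (hψ : ∀ j, ‖ψ j‖ = 1 / √d) :
    ∑ n, mcsKraus ψ φ n * vecMulVec ψ (star ψ) * (mcsKraus ψ φ n)ᴴ = vecMulVec φ (star φ) := by
  obtain rfl | hd := eq_or_ne d 0
  · exact Subsingleton.elim _ _
  have hcoef : (d : ℂ) * (star (√d : ℂ)⁻¹ * (√d : ℂ)⁻¹) = 1 := by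
    rw [star_inv₀, Complex.star_def, Complex.conj_ofReal, ← mul_inv,
      ofReal_sqrt_natCast_mul_self, mul_inv_cancel₀ (Nat.cast_ne_zero.2 hd)]
  simp only [mul_vecMulVec_star_mul_conjTranspose, mcsKraus_mulVec hψ, Finset.sum_const,
    Finset.card_univ, Fintype.card_fin, star_smul, smul_vecMulVec, vecMulVec_smul, smul_smul,
    ← Nat.cast_smul_eq_nsmul ℂ, hcoef, one_smul]

theorem conjTranspose_mcsKraus_mul_self (hψ : ∀ j, ‖ψ j‖ = 1 / √d) (n : Fin d) :
    (mcsKraus ψ φ n)ᴴ * mcsKraus ψ φ n = diagonal fun k => ((‖φ (k - n)‖ ^ 2 : ℝ) : ℂ) := by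
  ext a b
  have : NeZero d := ⟨(Fin.pos a).ne'⟩
  simp only [mcsKraus, mul_apply, conjTranspose_apply, of_apply, ← eq_sub_iff_add_eq,
    diagonal_apply, apply_ite star, star_zero, ite_mul, zero_mul, mul_ite, mul_zero,
    Finset.sum_ite_eq', Finset.mem_univ, if_true]
  obtain rfl | hab := eq_or_ne a b
  · simp only [if_true]
    have hs : √(d : ℝ) ≠ 0 := (Real.sqrt_pos.2 (Nat.cast_pos.2 (Fin.pos a))).ne'
    rw [Complex.star_def, Complex.conj_mul', norm_mul, norm_mul, Complex.norm_conj, hψ,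
      Complex.norm_real, Real.norm_of_nonneg (Real.sqrt_nonneg _)]
    field_simp
    norm_cast
  · simp [hab, hab.symm]

theorem isIncoherentKraus_mcsKraus (hψ : ∀ j, ‖ψ j‖ = 1 / √d) (hφ : ∑ j, ‖φ j‖ ^ 2 = 1) :
    IsIncoherentKraus (mcsKraus ψ φ) := by
  refine ⟨?_, fun D _ hD n i j hij => ?_⟩
  · ext a b
    have : NeZero d := ⟨(Fin.pos a).ne'⟩
    simp only [conjTranspose_mcsKraus_mul_self hψ, Matrix.sum_apply, diagonal_apply, one_apply,
      Finset.sum_ite_irrel, Finset.sum_const_zero]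
    split_ifs
    · exact_mod_cast ((Equiv.subLeft a).sum_comp fun k => ‖φ k‖ ^ 2).trans hφ
    · rfl
  · have hD0 : D (i + n) (j + n) = 0 := hD (add_right_cancel.mt hij)
    simp [mul_apply, conjTranspose_apply, mcsKraus, apply_ite (starRingEnd ℂ), hD0]

end MaximallyCoherent

namespace IsValidCoherenceMeasure

variable {d : ℕ} {C : Matrix (Fin d) (Fin d) ℂ → ℝ} {ρ σ : Matrix (Fin d) (Fin d) ℂ}

theorem pure_le_of_inSMCS (hC : IsValidCoherenceMeasure C) (hρ : InSMCS ρ) {φ : Fin d → ℂ}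
    (hφ : ∑ j, ‖φ j‖ ^ 2 = 1) : C (vecMulVec φ (star φ)) ≤ C ρ := by
  obtain ⟨ψ, hψ, hψ_flat, rfl⟩ := hρ
  simpa only [sum_mcsKraus_conj_vecMulVec hψ_flat] using
    hC.2.2.1 _ (isDensityMatrix_vecMulVec_star hψ) d _ (isIncoherentKraus_mcsKraus hψ_flat hφ)

theorem le_of_inSMCS (hC : IsValidCoherenceMeasure C) (hρ : InSMCS ρ) (hσ : IsDensityMatrix σ) :
    C σ ≤ C ρ := by
  have hH : σ.IsHermitian := hσ.1.1
  have heig_sum : ∑ k, hH.eigenvalues k = 1 := by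
    have h := hH.trace_eq_sum_eigenvalues.symm.trans hσ.2
    rwa [← RCLike.ofReal_sum, ← RCLike.ofReal_one, RCLike.ofReal_inj] at h
  have hv := hH.sum_norm_sq_eigenvectorBasis
  calc C σ = C (∑ k, (hH.eigenvalues k : ℂ) •
        vecMulVec ⇑(hH.eigenvectorBasis k) (star ⇑(hH.eigenvectorBasis k))) :=
        congrArg C hH.eq_sum_eigenvalues_smul_vecMulVec
    _ ≤ ∑ k, hH.eigenvalues k *
        C (vecMulVec ⇑(hH.eigenvectorBasis k) (star ⇑(hH.eigenvectorBasis k))) :=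
        hC.2.2.2.2 d _ _ hσ.1.eigenvalues_nonneg heig_sum fun k =>
          isDensityMatrix_vecMulVec_star (hv k)
    _ ≤ ∑ k, hH.eigenvalues k * C ρ := by
        gcongr with k
        · exact hσ.1.eigenvalues_nonneg k
        · exact hC.pure_le_of_inSMCS hρ (hv k)
    _ = C ρ := by rw [← Finset.sum_mul, heig_sum, one_mul]

end IsValidCoherenceMeasure

/-- every valid coherence measure is maximized by all states of S_MCS,
and it takes the same value on all of them. -/
theorem SMCS_maximizes_valid_measure
    {d : ℕ} (C : Matrix (Fin d) (Fin d) ℂ → ℝ) (hC : IsValidCoherenceMeasure C) :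
    (∀ ρ, InSMCS ρ → ∀ σ, IsDensityMatrix σ → C σ ≤ C ρ) ∧
    (∀ ρ ρ', InSMCS ρ → InSMCS ρ' → C ρ = C ρ') :=
  ⟨fun _ hρ _ hσ => hC.le_of_inSMCS hρ hσ, fun _ _ hρ hρ' =>
    (hC.le_of_inSMCS hρ' hρ.isDensityMatrix).antisymm (hC.le_of_inSMCS hρ hρ'.isDensityMatrix)⟩
end
end

section
/- Let ρ be a density matrix on ℂ^d and define C_{ℓ1}(ρ) = ∑_{i≠j} |ρ_{ij}| (sum of absolute values of all off-diagonal entries). Then C_{ℓ1}(ρ) ≤ d − 1, and equality C_{ℓ1}(ρ) = d − 1 holds if and only if ρ belongs to S_MCS. -/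
open Matrix BigOperators
open scoped ComplexOrder

noncomputable section

/-! Write `ρ` as the Gram matrix of vectors `vᵢ`. Cauchy–Schwarz for each entry gives
`C_{ℓ1}(ρ) ≤ ∑_{i ≠ j} ‖vᵢ‖‖vⱼ‖ = (∑ ‖vᵢ‖)² - tr ρ`, and Cauchy–Schwarz in `ℝ^d` gives
`(∑ ‖vᵢ‖)² ≤ d · ∑ ‖vᵢ‖² = d · tr ρ`. At equality both are tight: all `vᵢ` are parallel, so `ρ`
is a rank-one projection `ψψᴴ` with `|ψᵢ| = ‖vᵢ‖`, and all `‖vᵢ‖` coincide, hence equal `1/√d`. -/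

open scoped InnerProductSpace

variable {n : Type*}

def l1Coherence {α : Type*} [Norm α] [Fintype n] [DecidableEq n] (ρ : Matrix n n α) : ℝ :=
  ∑ i, ∑ j, if i ≠ j then ‖ρ i j‖ else 0

section Sums

variable [Fintype n] {R : Type*} [CommRing R]

theorem sum_offDiag_mul_eq [DecidableEq n] (a : n → R) :
    ∑ i, ∑ j, (if i ≠ j then a i * a j else 0) = (∑ i, a i) ^ 2 - ∑ i, a i ^ 2 := by
  have h i j : (if i ≠ j then a i * a j else 0) = a i * a j - if i = j then a i * a j else 0 := by
    split_ifs <;> simp_all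
  simp [h, Finset.sum_sub_distrib, sq, Finset.sum_mul_sum]

theorem sum_sum_sub_sq_eq (a : n → R) :
    ∑ i, ∑ j, (a i - a j) ^ 2 = 2 * (Fintype.card n * ∑ i, a i ^ 2 - (∑ i, a i) ^ 2) := by
  simp only [sub_sq, Finset.sum_add_distrib, Finset.sum_sub_distrib, Finset.sum_const,
    Finset.card_univ, nsmul_eq_mul, ← Finset.mul_sum, ← Finset.sum_mul, mul_assoc]
  ring

theorem sq_sum_eq_card_mul_sum_sq_iff [LinearOrder R] [IsStrictOrderedRing R] (a : n → R) :
    (∑ i, a i) ^ 2 = Fintype.card n * ∑ i, a i ^ 2 ↔ ∀ i j, a i = a j := by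
  have hsq : ∀ i j, 0 ≤ (a i - a j) ^ 2 := fun i j => sq_nonneg _
  rw [← sub_eq_zero, ← neg_eq_zero, neg_sub, ← mul_eq_zero_iff_left two_ne_zero,
    ← sum_sum_sub_sq_eq,
    Fintype.sum_eq_zero_iff_of_nonneg fun i => Finset.sum_nonneg fun j _ => hsq i j]
  simp only [funext_iff, Pi.zero_apply, Fintype.sum_eq_zero_iff_of_nonneg (hsq _),
    sq_eq_zero_iff, sub_eq_zero]

theorem eq_one_div_sqrt_card_of_sum_sq_eq_one {a : n → ℝ} (h0 : ∀ i, 0 ≤ a i)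
    (hconst : ∀ i j, a i = a j) (hsum : ∑ i, a i ^ 2 = 1) (i : n) :
    a i = 1 / √(Fintype.card n) := by
  have hcard : Fintype.card n * a i ^ 2 = 1 := by simpa [hconst _ i] using hsum
  have hsq : a i ^ 2 = 1 / Fintype.card n := eq_one_div_of_mul_eq_one_right hcard
  rw [← Real.sqrt_sq (h0 i), hsq, one_div, Real.sqrt_inv, one_div]

end Sums

section Gram

variable {𝕜 E : Type*} [RCLike 𝕜] [NormedAddCommGroup E] [InnerProductSpace 𝕜 E]

theorem ite_ne_norm_inner_le [DecidableEq n] (v : n → E) (i j : n) :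
    (if i ≠ j then ‖⟪v i, v j⟫_𝕜‖ else 0) ≤ if i ≠ j then ‖v i‖ * ‖v j‖ else 0 := by
  split_ifs
  exacts [norm_inner_le_norm _ _, le_rfl]

variable [Fintype n]

theorem Matrix.PosSemidef.exists_eq_gram [DecidableEq n] {A : Matrix n n 𝕜} (hA : A.PosSemidef) :
    ∃ v : n → EuclideanSpace 𝕜 n, A = gram 𝕜 v := by
  open scoped MatrixOrder in
  obtain ⟨B, rfl⟩ := CStarAlgebra.nonneg_iff_eq_star_mul_self.mp hA.nonneg
  exact ⟨fun i => WithLp.toLp 2 (fun k => B k i),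
    by ext i j; simp [mul_apply, PiLp.inner_apply, mul_comm]⟩

theorem Matrix.trace_gram (v : n → E) : (gram 𝕜 v).trace = ((∑ i, ‖v i‖ ^ 2 : ℝ) : 𝕜) := by
  simp [trace, inner_self_eq_norm_sq_to_K]

theorem l1Coherence_gram_le [DecidableEq n] (v : n → E) :
    l1Coherence (gram 𝕜 v) ≤ (∑ i, ‖v i‖) ^ 2 - ∑ i, ‖v i‖ ^ 2 := by
  rw [← sum_offDiag_mul_eq]
  exact Finset.sum_le_sum fun i _ => Finset.sum_le_sum fun j _ => ite_ne_norm_inner_le v i j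

theorem l1Coherence_gram_eq_iff [DecidableEq n] (v : n → E) :
    l1Coherence (gram 𝕜 v) = (∑ i, ‖v i‖) ^ 2 - ∑ i, ‖v i‖ ^ 2 ↔
      ∀ i j, ‖⟪v i, v j⟫_𝕜‖ = ‖v i‖ * ‖v j‖ := by
  simp only [l1Coherence, gram_apply]
  rw [← sum_offDiag_mul_eq, Finset.sum_eq_sum_iff_of_le fun i _ =>
    Finset.sum_le_sum fun j _ => ite_ne_norm_inner_le v i j]
  simp only [Finset.mem_univ, true_imp_iff,
    Finset.sum_eq_sum_iff_of_le fun j _ => ite_ne_norm_inner_le v _ j]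
  refine forall₂_congr fun i j => ?_
  rcases eq_or_ne i j with rfl | hij
  · simp [inner_self_eq_norm_sq_to_K, sq]
  · simp [hij]

theorem exists_gram_eq_vecMulVec (v : n → E) (h : ∀ i j, ‖⟪v i, v j⟫_𝕜‖ = ‖v i‖ * ‖v j‖) :
    ∃ ψ : n → 𝕜, (∀ i, ‖ψ i‖ = ‖v i‖) ∧ gram 𝕜 v = vecMulVec ψ (star ψ) := by
  by_cases hv : ∀ i, v i = 0
  · exact ⟨0, by simp [hv], by ext i j; simp [hv]⟩
  push Not at hv
  obtain ⟨i₀, hw⟩ := hv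
  set w := v i₀
  have hwpos : 0 < ‖w‖ := norm_pos_iff.2 hw
  have hspan j : v j = (⟪w, v j⟫_𝕜 / ⟪w, w⟫_𝕜) • w :=
    Or.resolve_left (((norm_inner_eq_norm_tfae 𝕜 w (v j)).out 0 1).1 (h i₀ j)) hw
  refine ⟨fun i => ⟪v i, w⟫_𝕜 / ‖w‖, fun i => ?_, ?_⟩
  · rw [norm_div, h, RCLike.norm_ofReal, abs_of_pos hwpos, mul_div_cancel_right₀ _ hwpos.ne']
  · ext i j
    rw [gram_apply, vecMulVec_apply, Pi.star_apply]
    conv_lhs => rw [hspan j, inner_smul_right, inner_self_eq_norm_sq_to_K]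
    simp only [star_div₀, RCLike.star_def, inner_conj_symm, RCLike.conj_ofReal]
    ring

theorem l1Coherence_vecMulVec_star [DecidableEq n] (ψ : n → 𝕜) :
    l1Coherence (vecMulVec ψ (star ψ)) = (∑ i, ‖ψ i‖) ^ 2 - ∑ i, ‖ψ i‖ ^ 2 := by
  simp only [l1Coherence, vecMulVec_apply, Pi.star_apply, norm_mul, norm_star]
  exact sum_offDiag_mul_eq _

end Gram

/-- the ℓ₁-norm coherence is at most d−1, with equality exactly on
S_MCS. -/
theorem l1_coherence_le_and_eq_iff
    {d : ℕ} (ρ : Matrix (Fin d) (Fin d) ℂ) (hρ : IsDensityMatrix ρ) :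
    (∑ i, ∑ j, if i ≠ j then ‖ρ i j‖ else 0) ≤ (d : ℝ) - 1 ∧
    ((∑ i, ∑ j, if i ≠ j then ‖ρ i j‖ else 0) = (d : ℝ) - 1 ↔
      InSMCS ρ) := by
  change l1Coherence ρ ≤ _ ∧ (l1Coherence ρ = _ ↔ _)
  obtain ⟨hpsd, htrace⟩ := hρ
  obtain ⟨v, rfl⟩ := hpsd.exists_eq_gram
  have hnorm : ∑ i, ‖v i‖ ^ 2 = 1 :=
    Complex.ofReal_eq_one.1 ((trace_gram v).symm.trans htrace)
  have hCS : (∑ i, ‖v i‖) ^ 2 ≤ d * ∑ i, ‖v i‖ ^ 2 := by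
    simpa using sq_sum_le_card_mul_sum_sq (s := Finset.univ) (f := fun i => ‖v i‖)
  have hle := l1Coherence_gram_le (𝕜 := ℂ) v
  rw [hnorm] at hCS hle
  refine ⟨by linarith, fun heq => ?_, ?_⟩
  · obtain ⟨ψ, hψv, hψ⟩ :=
      exists_gram_eq_vecMulVec v ((l1Coherence_gram_eq_iff (𝕜 := ℂ) v).1 (by linarith))
    have hconst := (sq_sum_eq_card_mul_sum_sq_iff fun i => ‖v i‖).1
      (by simp only [Fintype.card_fin, hnorm]; linarith)
    refine ⟨ψ, by simpa [hψv] using hnorm, fun j => ?_, hψ⟩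
    simpa [hψv] using eq_one_div_sqrt_card_of_sum_sq_eq_one (fun i => norm_nonneg _) hconst hnorm j
  · rintro ⟨ψ, hsum, hmod, hψ⟩
    have hconst : ∀ i j, ‖ψ i‖ = ‖ψ j‖ := fun i j => by rw [hmod, hmod]
    rw [hψ, l1Coherence_vecMulVec_star, (sq_sum_eq_card_mul_sum_sq_iff _).2 hconst, hsum]
    simp
end
end

section
/- Let ρ be a density matrix on ℂ^d with d ≥ 1, and define the relative entropy of coherence C_rel(ρ) = S(Δ(ρ)) − S(ρ), where Δ(ρ) is the diagonal matrix with the same diagonal entries as ρ, and S(τ) = ∑_i negMulLog(λ_i(τ)) with λ_i(τ) the eigenvalues of the Hermitian matrix τ (negMulLog x = −x·log x). Then C_rel(ρ) ≤ log d, and equality C_rel(ρ) = log d holds if and only if ρ belongs to S_MCS. -/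
open Matrix BigOperators
open scoped ComplexOrder

noncomputable section

/-!
The eigenvalues of `Δ(ρ)` are its diagonal entries `p j = ρ j j`, a probability vector, so
`S(Δ ρ) ≤ log d` by Jensen's inequality for the strictly concave `negMulLog`, with equality iff
`p` is uniform. On the other hand `S(ρ) ≥ 0`, with equality iff the spectrum of `ρ` is
`{1, 0, …, 0}`, i.e. iff `ρ = ψψᴴ` is a pure state; then `p j = ‖ψ j‖²`. Hence
`C_rel(ρ) ≤ log d`, with equality iff `ρ` is pure with `‖ψ j‖² = 1/d` for all `j`.
-/

lemma card_pos_of_sum_eq_one {ι : Type*} [Fintype ι] {p : ι → ℝ} (hs : ∑ i, p i = 1) :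
    (0 : ℝ) < Fintype.card ι := by
  rcases isEmpty_or_nonempty ι with h | h
  · simp at hs
  · exact_mod_cast Fintype.card_pos

namespace Real

variable {ι : Type*} [Fintype ι] {p : ι → ℝ}

/-- Jensen with the uniform weights `1 / card ι` at the points `card ι * p i` is exactly the
entropy bound. -/
lemma sum_inv_card_mul_negMulLog_card_mul (hs : ∑ i, p i = 1) :
    ∑ i, (Fintype.card ι : ℝ)⁻¹ * negMulLog (Fintype.card ι * p i) =
      ∑ i, negMulLog (p i) - log (Fintype.card ι) := by
  have hn := (card_pos_of_sum_eq_one hs).ne'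
  have hterm i : (Fintype.card ι : ℝ)⁻¹ * negMulLog (Fintype.card ι * p i) =
      negMulLog (p i) - p i * log (Fintype.card ι) := by
    rw [negMulLog_mul, negMulLog]
    field_simp
    ring
  simp only [hterm, Finset.sum_sub_distrib, ← Finset.sum_mul, hs, one_mul]

lemma sum_negMulLog_le_log_card (hp : ∀ i, 0 ≤ p i) (hs : ∑ i, p i = 1) :
    ∑ i, negMulLog (p i) ≤ log (Fintype.card ι) := by
  have hn := card_pos_of_sum_eq_one hs
  have h := concaveOn_negMulLog.le_map_sum (t := Finset.univ)
    (w := fun _ => (Fintype.card ι : ℝ)⁻¹) (p := fun i => Fintype.card ι * p i)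
    (fun _ _ => by positivity) (by simp [hn.ne'])
    (fun i _ => Set.mem_Ici.2 (mul_nonneg hn.le (hp i)))
  simp only [smul_eq_mul, ← mul_assoc, inv_mul_cancel₀ hn.ne', one_mul, hs, negMulLog_one] at h
  linarith [sum_inv_card_mul_negMulLog_card_mul hs]

lemma sum_negMulLog_eq_log_card_iff (hp : ∀ i, 0 ≤ p i) (hs : ∑ i, p i = 1) :
    ∑ i, negMulLog (p i) = log (Fintype.card ι) ↔ ∀ i, p i = (Fintype.card ι : ℝ)⁻¹ := by
  have hn := card_pos_of_sum_eq_one hs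
  refine ⟨fun h => ?_, fun h => ?_⟩
  · have hconst := strictConcaveOn_negMulLog.eq_of_map_sum_eq (t := Finset.univ)
      (w := fun _ => (Fintype.card ι : ℝ)⁻¹) (p := fun i => Fintype.card ι * p i)
      (fun _ _ => by positivity) (by simp [hn.ne'])
      (fun i _ => Set.mem_Ici.2 (mul_nonneg hn.le (hp i)))
      (by simp only [smul_eq_mul, ← mul_assoc, inv_mul_cancel₀ hn.ne', one_mul, hs,
            negMulLog_one, sum_inv_card_mul_negMulLog_card_mul hs, h, sub_self, le_refl])
    intro i
    have hi : ∀ j, p j = p i := fun j =>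
      mul_left_cancel₀ hn.ne' (hconst (Finset.mem_univ j) (Finset.mem_univ i))
    rw [Finset.sum_congr rfl fun j _ => hi j, Finset.sum_const, Finset.card_univ,
      nsmul_eq_mul] at hs
    exact eq_inv_of_mul_eq_one_right hs
  · simp only [h, Finset.sum_const, Finset.card_univ, nsmul_eq_mul, negMulLog, log_inv]
    field_simp

lemma sum_negMulLog_nonneg (hp : ∀ i, 0 ≤ p i) (hs : ∑ i, p i = 1) :
    0 ≤ ∑ i, negMulLog (p i) :=
  Finset.sum_nonneg fun i _ =>
    negMulLog_nonneg (hp i) (hs ▸ Finset.single_le_sum (fun j _ => hp j) (Finset.mem_univ i))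

lemma sum_negMulLog_eq_zero_iff (hp : ∀ i, 0 ≤ p i) (hs : ∑ i, p i = 1) :
    ∑ i, negMulLog (p i) = 0 ↔ ∀ i, p i = 0 ∨ p i = 1 := by
  have hle i : p i ≤ 1 := hs ▸ Finset.single_le_sum (fun j _ => hp j) (Finset.mem_univ i)
  rw [Finset.sum_eq_zero_iff_of_nonneg fun i _ => negMulLog_nonneg (hp i) (hle i)]
  refine forall_congr' fun i => ?_
  simp only [Finset.mem_univ, true_implies, negMulLog, neg_mul, neg_eq_zero, mul_eq_zero,
    log_eq_zero]
  have := hp i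
  constructor
  · rintro (h | h | h | h) <;> first | exact Or.inl h | exact Or.inr h | linarith
  · rintro (h | h) <;> simp [h]

end Real

lemma exists_eq_single_of_sum_eq_one {ι : Type*} [Fintype ι] [DecidableEq ι] {p : ι → ℝ}
    (h01 : ∀ i, p i = 0 ∨ p i = 1) (hs : ∑ i, p i = 1) : ∃ k, p = Pi.single k 1 := by
  have hcard : (Finset.univ.filter fun i => p i = 1).card = 1 := by
    have hind i : p i = if p i = 1 then 1 else 0 := by rcases h01 i with h | h <;> simp [h]
    rw [Finset.sum_congr rfl fun i _ => hind i, Finset.sum_boole] at hs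
    exact_mod_cast hs
  obtain ⟨k, hk⟩ := Finset.card_eq_one.1 hcard
  refine ⟨k, funext fun i => ?_⟩
  have hi : p i = 1 ↔ i = k := by simpa using Finset.ext_iff.1 hk i
  by_cases hik : i = k
  · subst hik
    simpa using hi.2 rfl
  · rw [Pi.single_eq_of_ne hik]
    exact (h01 i).resolve_right (mt hi.1 hik)

namespace Matrix

lemma re_vecMulVec_star_apply_self {𝕜 n : Type*} [RCLike 𝕜] (ψ : n → 𝕜) (j : n) :
    RCLike.re (vecMulVec ψ (star ψ) j j) = ‖ψ j‖ ^ 2 := by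
  simp [vecMulVec_apply, RCLike.mul_conj]

variable {𝕜 n : Type*} [RCLike 𝕜] [Fintype n]

lemma isIdempotentElem_vecMulVec_star {ψ : n → 𝕜} (h : ∑ j, ‖ψ j‖ ^ 2 = 1) :
    IsIdempotentElem (vecMulVec ψ (star ψ)) := by
  have hψ : star ψ ⬝ᵥ ψ = 1 := by
    simp only [dotProduct, Pi.star_apply, RCLike.star_def, RCLike.conj_mul]
    exact_mod_cast h
  rw [IsIdempotentElem, vecMulVec_mul_vecMulVec, hψ, one_smul]

lemma sum_re_diag_eq_one {A : Matrix n n 𝕜} (h : A.trace = 1) : ∑ j, RCLike.re (A j j) = 1 := by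
  simpa [trace] using congrArg RCLike.re h

namespace IsHermitian

variable [DecidableEq n] {A : Matrix n n 𝕜}

lemma sum_eigenvalues_eq_one (hA : A.IsHermitian) (h : A.trace = 1) :
    ∑ i, hA.eigenvalues i = 1 := by
  rw [hA.trace_eq_sum_eigenvalues] at h
  exact_mod_cast h

lemma sum_comp_eigenvalues_diagonal {v : n → 𝕜} (h : (diagonal v).IsHermitian) (f : ℝ → ℝ) :
    ∑ i, f (h.eigenvalues i) = ∑ i, f (RCLike.re (v i)) := by
  have hroots : Multiset.map (RCLike.ofReal ∘ h.eigenvalues) Finset.univ.val =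
      Multiset.map v Finset.univ.val := by
    rw [← h.roots_charpoly_eq_eigenvalues, charpoly_diagonal, Polynomial.roots_prod _ _
      (Finset.prod_ne_zero_iff.2 fun i _ => Polynomial.X_sub_C_ne_zero _)]
    simp only [Polynomial.roots_X_sub_C, Multiset.bind_singleton]
  have := congrArg (fun s => (s.map (f ∘ RCLike.re)).sum) hroots
  simp only [Multiset.map_map, Function.comp_def, RCLike.ofReal_re] at this
  exact this

lemma eigenvalues_eq_zero_or_one (hA : A.IsHermitian) (h : IsIdempotentElem A) (i : n) :
    hA.eigenvalues i = 0 ∨ hA.eigenvalues i = 1 :=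
  h.spectrum_subset ℝ (hA.spectrum_real_eq_range_eigenvalues ▸ Set.mem_range_self i)

lemma eq_vecMulVec_of_eigenvalues_eq_single (hA : A.IsHermitian) {k : n}
    (hk : hA.eigenvalues = Pi.single k 1) :
    A = vecMulVec ⇑(hA.eigenvectorBasis k) (star ⇑(hA.eigenvectorBasis k)) := by
  have hD : diagonal (RCLike.ofReal ∘ hA.eigenvalues) =
      vecMulVec (Pi.single k 1) (Pi.single k (1 : 𝕜)) := by
    ext i j
    by_cases hi : i = k <;> by_cases hj : j = k <;> subst_vars <;>
      simp [diagonal_apply, vecMulVec_apply, *, Ne.symm]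
  conv_lhs => rw [hA.spectral_theorem, Unitary.conjStarAlgAut_apply, hD, mul_vecMulVec,
    vecMulVec_mul, mulVec_single_one, single_one_vecMul]
  congr 1

end IsHermitian

end Matrix

open Real in
lemma inSMCS_iff_of_isDensityMatrix {d : ℕ} {ρ : Matrix (Fin d) (Fin d) ℂ}
    (hρ : IsDensityMatrix ρ) :
    InSMCS ρ ↔ (∀ j, (ρ j j).re = (d : ℝ)⁻¹) ∧
      ∀ i, hρ.1.1.eigenvalues i = 0 ∨ hρ.1.1.eigenvalues i = 1 := by
  constructor
  · rintro ⟨ψ, hψ, hψd, rfl⟩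
    refine ⟨fun j => ?_, hρ.1.1.eigenvalues_eq_zero_or_one (isIdempotentElem_vecMulVec_star hψ)⟩
    rw [← RCLike.re_eq_complex_re, re_vecMulVec_star_apply_self, hψd, div_pow, one_pow,
      sq_sqrt d.cast_nonneg, one_div]
  · rintro ⟨hdiag, h01⟩
    obtain ⟨k, hk⟩ := exists_eq_single_of_sum_eq_one h01 (hρ.1.1.sum_eigenvalues_eq_one hρ.2)
    have hρψ := hρ.1.1.eq_vecMulVec_of_eigenvalues_eq_single hk
    set ψ : Fin d → ℂ := ⇑(hρ.1.1.eigenvectorBasis k)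
    have hnorm j : ‖ψ j‖ ^ 2 = (ρ j j).re := by
      rw [← RCLike.re_eq_complex_re, ← re_vecMulVec_star_apply_self, ← hρψ]
    refine ⟨ψ, ?_, fun j => ?_, hρψ⟩
    · simpa [hnorm] using sum_re_diag_eq_one hρ.2
    · rw [one_div, ← sqrt_inv, ← hdiag j, ← hnorm, sqrt_sq (norm_nonneg _)]

theorem relative_entropy_coherence_le_and_eq_iff_general
    {d : ℕ} (ρ : Matrix (Fin d) (Fin d) ℂ) (hρ : IsDensityMatrix ρ)
    (hΔ : (Matrix.diagonal fun i => ρ i i).IsHermitian) :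
    ((∑ i, Real.negMulLog (hΔ.eigenvalues i)) -
        (∑ i, Real.negMulLog (hρ.1.1.eigenvalues i)) ≤ Real.log d) ∧
    ((∑ i, Real.negMulLog (hΔ.eigenvalues i)) -
        (∑ i, Real.negMulLog (hρ.1.1.eigenvalues i)) = Real.log d ↔ InSMCS ρ) := by
  have hp0 j : 0 ≤ (ρ j j).re := (Complex.nonneg_iff.1 (hρ.1.diag_nonneg (i := j))).1
  have hp1 : ∑ j, (ρ j j).re = 1 := by simpa using sum_re_diag_eq_one hρ.2
  have hq0 := hρ.1.eigenvalues_nonneg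
  have hq1 := hρ.1.1.sum_eigenvalues_eq_one hρ.2
  have hle := Real.sum_negMulLog_le_log_card hp0 hp1
  have hunif := Real.sum_negMulLog_eq_log_card_iff hp0 hp1
  rw [Fintype.card_fin] at hle hunif
  have hnn := Real.sum_negMulLog_nonneg hq0 hq1
  simp only [hΔ.sum_comp_eigenvalues_diagonal Real.negMulLog, RCLike.re_to_complex]
  rw [inSMCS_iff_of_isDensityMatrix hρ, ← hunif, ← Real.sum_negMulLog_eq_zero_iff hq0 hq1]
  refine ⟨by linarith, fun h => ⟨by linarith, by linarith⟩, fun ⟨h₁, h₂⟩ => by linarith⟩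

/-- the relative entropy of coherence is at most log d, with equality
exactly on S_MCS. -/
theorem relative_entropy_coherence_le_and_eq_iff
    {d : ℕ} (hd : 1 ≤ d) (ρ : Matrix (Fin d) (Fin d) ℂ) (hρ : IsDensityMatrix ρ)
    (hΔ : (Matrix.diagonal fun i => ρ i i).IsHermitian) :
    ((∑ i, Real.negMulLog (hΔ.eigenvalues i)) -
        (∑ i, Real.negMulLog (hρ.1.1.eigenvalues i)) ≤ Real.log d) ∧
    ((∑ i, Real.negMulLog (hΔ.eigenvalues i)) -
        (∑ i, Real.negMulLog (hρ.1.1.eigenvalues i)) = Real.log d ↔ InSMCS ρ) :=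
  relative_entropy_coherence_le_and_eq_iff_general ρ hρ hΔ
end
end

section
/- Let ρ be a density matrix on ℂ^d that is not pure (i.e., ρ ≠ ψψᴴ for every unit vector ψ, equivalently ρ has rank at least 2). Then ρ admits a finite pure-state ensemble decomposition ρ = ∑_k q_k φ_k φ_kᴴ, with q_k > 0 summing to 1 and each φ_k a unit vector, in which at least one of the rank-one projections φ_k φ_kᴴ does not belong to S_MCS. Consequently, no non-pure density matrix has all of its pure-state decompositions supported entirely on S_MCS. -/
open Matrix BigOperators
open scoped ComplexOrder

noncomputable section

/-! Write `ρ = ∑ λᵢ eᵢ eᵢᴴ` spectrally. Since `ρ` is not pure, two eigenvectors `a, b` carry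
positive weights `p, r`. Every matrix in `S_MCS` has all diagonal entries `1/d`, so if some
eigenvector of positive weight vanishes at a fixed coordinate `j`, the spectral decomposition
already leaves `S_MCS`. Otherwise `a j * b j ≠ 0`, and for every phase `|z| = 1`,
`p a aᴴ + r b bᴴ = (p + r)/2 (w₊ w₊ᴴ + w₋ w₋ᴴ)` with `w± = √(p/(p+r)) a ± z √(r/(p+r)) b`.
If all of `w±` lay in `S_MCS` for `z = 1` and `z = i`, then `|x + y| = |x - y|` and
`|x + i y| = |x - i y|` for `x = √(p/(p+r)) a j`, `y = √(r/(p+r)) b j`, forcing `x y = 0`. -/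

theorem Matrix.IsHermitian.eq_sum_eigenvalues_smul_vecMulVec_s11 {𝕜 n : Type*} [RCLike 𝕜]
    [Fintype n] [DecidableEq n] {A : Matrix n n 𝕜} (hA : A.IsHermitian) :
    A = ∑ i, (hA.eigenvalues i : 𝕜) •
      vecMulVec ⇑(hA.eigenvectorBasis i) (star ⇑(hA.eigenvectorBasis i)) := by
  conv_lhs => rw [hA.spectral_theorem]
  ext j l
  simp only [diagonal, Function.comp_apply, Unitary.conjStarAlgAut_apply, mul_apply,
    eigenvectorUnitary_apply, of_apply, mul_ite, mul_zero, Finset.sum_ite_eq', Finset.mem_univ,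
    ↓reduceIte, star_apply, RCLike.star_def, algebraMap_smul, sum_apply, smul_apply,
    vecMulVec_apply, Pi.star_apply]
  refine Finset.sum_congr rfl fun i _ => ?_
  rw [RCLike.real_smul_eq_coe_smul (K := 𝕜), smul_eq_mul]
  ring

theorem trace_vecMulVec_star {n : Type*} [Fintype n] (x : EuclideanSpace ℂ n) :
    (vecMulVec ⇑x (star ⇑x)).trace = ((‖x‖ ^ 2 : ℝ) : ℂ) := by
  simp [EuclideanSpace.norm_sq_eq, dotProduct, Complex.mul_conj, Complex.normSq_eq_norm_sq]

theorem vecMulVec_star_apply_self {n : Type*} (v : n → ℂ) (j : n) :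
    vecMulVec v (star v) j j = ((‖v j‖ ^ 2 : ℝ) : ℂ) := by
  simp [vecMulVec_apply, Complex.mul_conj, Complex.normSq_eq_norm_sq]

theorem Fintype.sum_eq_sum_of_eq_off_pair {ι M : Type*} [Fintype ι] [DecidableEq ι]
    [AddCommMonoid M] {f g : ι → M} {i j : ι} (hij : i ≠ j) (hpair : f i + f j = g i + g j)
    (hoff : ∀ k, k ≠ i → k ≠ j → f k = g k) : ∑ k, f k = ∑ k, g k := by
  rw [← Finset.sum_add_sum_compl {i, j} f, ← Finset.sum_add_sum_compl {i, j} g,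
    Finset.sum_pair hij, Finset.sum_pair hij, hpair]
  congr 1
  refine Finset.sum_congr rfl fun k hk => ?_
  simp only [Finset.mem_compl, Finset.mem_insert, Finset.mem_singleton, not_or] at hk
  exact hoff k hk.1 hk.2

theorem Fintype.sum_equivFin_symm_subtype {ι M : Type*} [Fintype ι] [AddCommMonoid M]
    (p : ι → Prop) [DecidablePred p] (f : ι → M) (hf : ∀ i, ¬ p i → f i = 0) :
    ∑ k, f ((Fintype.equivFin {i // p i}).symm k) = ∑ i, f i := by
  rw [Equiv.sum_comp (Fintype.equivFin _).symm (fun i : {i // p i} => f i),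
    ← Finset.sum_subtype (Finset.univ.filter p) (by simp),
    Finset.sum_filter_of_ne fun i _ hi => by_contra fun h => hi (hf i h)]

/-- Unlike an ensemble, weights may vanish and their sum is left to the trace. -/
structure IsPureDecomposition {n ι : Type*} [Fintype n] [Fintype ι] (ρ : Matrix n n ℂ)
    (q : ι → ℝ) (φ : ι → EuclideanSpace ℂ n) : Prop where
  nonneg : ∀ i, 0 ≤ q i
  norm_eq_one : ∀ i, ‖φ i‖ = 1
  eq_sum : ρ = ∑ i, (q i : ℂ) • vecMulVec ⇑(φ i) (star ⇑(φ i))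

theorem Matrix.PosSemidef.isPureDecomposition_eigen {n : Type*} [Fintype n] [DecidableEq n]
    {ρ : Matrix n n ℂ} (hρ : ρ.PosSemidef) :
    IsPureDecomposition ρ hρ.1.eigenvalues hρ.1.eigenvectorBasis :=
  ⟨hρ.eigenvalues_nonneg, hρ.1.eigenvectorBasis.orthonormal.1,
    hρ.1.eq_sum_eigenvalues_smul_vecMulVec_s11⟩

namespace IsPureDecomposition

variable {n ι : Type*} [Fintype n] [Fintype ι] {ρ : Matrix n n ℂ} {q : ι → ℝ}
  {φ : ι → EuclideanSpace ℂ n}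

theorem sum_eq_trace (h : IsPureDecomposition ρ q φ) : ((∑ i, q i : ℝ) : ℂ) = ρ.trace := by
  rw [h.eq_sum, trace_sum]
  push_cast
  refine Finset.sum_congr rfl fun i _ => ?_
  rw [trace_smul, trace_vecMulVec_star, h.norm_eq_one i]
  simp

theorem exists_two_pos_of_not_pure (h : IsPureDecomposition ρ q φ) (htr : ρ.trace = 1)
    (hpure : ¬ ∃ ψ : n → ℂ, (∑ j, ‖ψ j‖ ^ 2 = 1) ∧ ρ = vecMulVec ψ (star ψ)) :
    ∃ i j, i ≠ j ∧ 0 < q i ∧ 0 < q j := by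
  have hsum : ∑ i, q i = 1 := by exact_mod_cast h.sum_eq_trace.trans htr
  obtain ⟨k, -, hk⟩ := Finset.exists_lt_of_sum_lt (f := 0) (s := Finset.univ)
    (by simp [hsum] : ∑ i, (0 : ι → ℝ) i < ∑ i, q i)
  by_contra! hone
  have hzero : ∀ i ≠ k, q i = 0 := fun i hi => le_antisymm (hone k i hi.symm hk) (h.nonneg i)
  have hqk : q k = 1 := by
    rwa [Finset.sum_eq_single k (fun i _ hi => hzero i hi) (by simp)] at hsum
  refine hpure ⟨φ k, by rw [← EuclideanSpace.norm_sq_eq, h.norm_eq_one, one_pow], ?_⟩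
  rw [h.eq_sum, Finset.sum_eq_single k (fun i _ hi => by simp [hzero i hi]) (by simp), hqk,
    Complex.ofReal_one, one_smul]

theorem update_pair [DecidableEq ι] (h : IsPureDecomposition ρ q φ) {i j : ι} (hij : i ≠ j)
    {qi qj : ℝ} {ψi ψj : EuclideanSpace ℂ n} (hqi : 0 ≤ qi) (hqj : 0 ≤ qj)
    (hψi : ‖ψi‖ = 1) (hψj : ‖ψj‖ = 1)
    (hpair : (q i : ℂ) • vecMulVec ⇑(φ i) (star ⇑(φ i)) +
        (q j : ℂ) • vecMulVec ⇑(φ j) (star ⇑(φ j)) =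
      (qi : ℂ) • vecMulVec ⇑ψi (star ⇑ψi) + (qj : ℂ) • vecMulVec ⇑ψj (star ⇑ψj)) :
    IsPureDecomposition ρ (Function.update (Function.update q i qi) j qj)
      (Function.update (Function.update φ i ψi) j ψj) := by
  refine ⟨fun k => ?_, fun k => ?_, h.eq_sum.trans ?_⟩
  · simp only [Function.update_apply]
    split_ifs
    exacts [hqj, hqi, h.nonneg k]
  · simp only [Function.update_apply]
    split_ifs
    exacts [hψj, hψi, h.norm_eq_one k]
  · refine Fintype.sum_eq_sum_of_eq_off_pair hij ?_ fun k hki hkj => ?_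
    · simpa [Function.update_of_ne hij, Function.update_of_ne hij.symm] using hpair
    · simp [Function.update_of_ne hki, Function.update_of_ne hkj]

theorem exists_fin_ensemble (h : IsPureDecomposition ρ q φ) (htr : ρ.trace = 1)
    (P : (n → ℂ) → Prop) {k : ι} (hk : 0 < q k) (hP : P (φ k)) :
    ∃ (N : ℕ) (q : Fin N → ℝ) (φ : Fin N → n → ℂ),
      (∀ k, 0 < q k) ∧ (∑ k, q k = 1) ∧ (∀ k, ∑ j, ‖φ k j‖ ^ 2 = 1) ∧
      ρ = ∑ k, (q k : ℂ) • vecMulVec (φ k) (star (φ k)) ∧ ∃ k, P (φ k) := by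
  classical
  have hzero : ∀ i, ¬ 0 < q i → q i = 0 := fun i hi => le_antisymm (not_lt.1 hi) (h.nonneg i)
  let e := Fintype.equivFin {i // 0 < q i}
  refine ⟨_, fun k => q (e.symm k), fun k => φ (e.symm k), fun k => (e.symm k).2, ?_,
    fun k => ?_, ?_, e ⟨k, hk⟩, by simpa using hP⟩
  · rw [Fintype.sum_equivFin_symm_subtype _ q hzero]
    exact_mod_cast h.sum_eq_trace.trans htr
  · rw [← EuclideanSpace.norm_sq_eq, h.norm_eq_one, one_pow]
  · rw [Fintype.sum_equivFin_symm_subtype (0 < q ·)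
      (fun i => (q i : ℂ) • vecMulVec ⇑(φ i) (star ⇑(φ i))) fun i hi => by simp [hzero i hi]]
    exact h.eq_sum

end IsPureDecomposition

theorem InSMCS.norm_apply {d : ℕ} {φ : Fin d → ℂ} (h : InSMCS (vecMulVec φ (star φ)))
    (j : Fin d) : ‖φ j‖ = 1 / Real.sqrt d := by
  obtain ⟨χ, -, hχ, hφχ⟩ := h
  have hdiag := congrFun (congrFun hφχ j) j
  rw [vecMulVec_star_apply_self, vecMulVec_star_apply_self, Complex.ofReal_inj,
    sq_eq_sq₀ (norm_nonneg _) (norm_nonneg _)] at hdiag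
  rw [hdiag, hχ]

theorem not_inSMCS_of_apply_eq_zero {d : ℕ} {φ : Fin d → ℂ} {j : Fin d} (h : φ j = 0) :
    ¬ InSMCS (vecMulVec φ (star φ)) := by
  intro hφ
  have hd : (0 : ℝ) < d := by exact_mod_cast j.pos
  have hnorm := hφ.norm_apply j
  rw [h, norm_zero] at hnorm
  exact (by positivity : (0 : ℝ) < 1 / Real.sqrt d).ne hnorm

theorem Complex.eq_zero_or_eq_zero_of_norm_add_eq_norm_sub {x y : ℂ}
    (h₁ : ‖x + y‖ = ‖x - y‖) (h₂ : ‖x + I * y‖ = ‖x - I * y‖) : x = 0 ∨ y = 0 := by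
  have hre : (x * (starRingEnd ℂ) y).re = 0 := by
    have hsq := congrArg (· ^ 2) h₁
    simp only [← Complex.normSq_eq_norm_sq, Complex.normSq_add, Complex.normSq_sub] at hsq
    linarith
  have him : (x * (starRingEnd ℂ) y).im = 0 := by
    have hsq := congrArg (· ^ 2) h₂
    simp only [← Complex.normSq_eq_norm_sq, Complex.normSq_add, Complex.normSq_sub, map_mul,
      Complex.conj_I, Complex.mul_re, Complex.mul_im, Complex.neg_re, Complex.neg_im,
      Complex.I_re, Complex.I_im, Complex.conj_re, Complex.conj_im] at hsq
    simp only [Complex.mul_im, Complex.conj_re, Complex.conj_im]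
    linarith
  simpa using Complex.ext (z := x * (starRingEnd ℂ) y) (w := 0) hre him

section PhaseSplit

variable {n : Type*}

def phaseSplit (p r : ℝ) (a b : EuclideanSpace ℂ n) (z : ℂ) : EuclideanSpace ℂ n :=
  (Real.sqrt (p / (p + r)) : ℂ) • a + (z * Real.sqrt (r / (p + r))) • b

variable {p r : ℝ} {a b : EuclideanSpace ℂ n} {z : ℂ}

theorem norm_phaseSplit [Fintype n] (hp : 0 < p) (hr : 0 < r) (ha : ‖a‖ = 1) (hb : ‖b‖ = 1)
    (hab : inner ℂ a b = 0) (hz : ‖z‖ = 1) : ‖phaseSplit p r a b z‖ = 1 := by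
  have horth : inner ℂ ((Real.sqrt (p / (p + r)) : ℂ) • a) ((z * Real.sqrt (r / (p + r))) • b)
      = 0 := by
    rw [inner_smul_left, inner_smul_right, hab, mul_zero, mul_zero]
  have hsq := norm_add_sq_eq_norm_sq_add_norm_sq_of_inner_eq_zero _ _ horth
  rw [← phaseSplit, norm_smul, norm_smul, norm_mul, ha, hb, hz] at hsq
  simp only [Complex.norm_real, Real.norm_eq_abs, abs_of_nonneg (Real.sqrt_nonneg _),
    mul_one, one_mul] at hsq
  rw [Real.mul_self_sqrt (by positivity), Real.mul_self_sqrt (by positivity), ← add_div,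
    div_self (by positivity)] at hsq
  exact (pow_eq_one_iff_of_nonneg (norm_nonneg _) two_ne_zero).1 (by rw [sq]; exact hsq)

theorem smul_vecMulVec_add_smul_vecMulVec_eq_phaseSplit (hp : 0 < p) (hr : 0 < r)
    (hz : ‖z‖ = 1) :
    (p : ℂ) • vecMulVec ⇑a (star ⇑a) + (r : ℂ) • vecMulVec ⇑b (star ⇑b) =
      (((p + r) / 2 : ℝ) : ℂ) •
        vecMulVec ⇑(phaseSplit p r a b z) (star ⇑(phaseSplit p r a b z)) +
      (((p + r) / 2 : ℝ) : ℂ) •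
        vecMulVec ⇑(phaseSplit p r a b (-z)) (star ⇑(phaseSplit p r a b (-z))) := by
  have hα : ((Real.sqrt (p / (p + r)) : ℂ)) ^ 2 * (p + r) = p := by
    rw [← Complex.ofReal_pow, Real.sq_sqrt (by positivity)]
    push_cast
    field_simp
  have hβ : ((Real.sqrt (r / (p + r)) : ℂ)) ^ 2 * (p + r) = r := by
    rw [← Complex.ofReal_pow, Real.sq_sqrt (by positivity)]
    push_cast
    field_simp
  have hzz : z * (starRingEnd ℂ) z = 1 := by
    rw [Complex.mul_conj, Complex.normSq_eq_norm_sq, hz]; norm_num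
  ext i j
  simp only [phaseSplit, Matrix.add_apply, Matrix.smul_apply, vecMulVec_apply, Pi.star_apply,
    WithLp.ofLp_add, WithLp.ofLp_smul, Pi.add_apply, Pi.smul_apply, smul_eq_mul,
    Complex.star_def, map_add, map_mul, map_neg, Complex.conj_ofReal]
  push_cast
  linear_combination (-(a i * (starRingEnd ℂ) (a j))) * hα - (b i * (starRingEnd ℂ) (b j)) * hβ
    - ((p + r) * (Real.sqrt (r / (p + r)) : ℂ) ^ 2 * (b i * (starRingEnd ℂ) (b j))) * hzz

theorem exists_phaseSplit_not_inSMCS {d : ℕ} {a b : EuclideanSpace ℂ (Fin d)} {j : Fin d}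
    (ha : a j ≠ 0) (hb : b j ≠ 0) (hp : 0 < p) (hr : 0 < r) :
    ∃ z : ℂ, ‖z‖ = 1 ∧
      (¬ InSMCS (vecMulVec ⇑(phaseSplit p r a b z) (star ⇑(phaseSplit p r a b z))) ∨
        ¬ InSMCS (vecMulVec ⇑(phaseSplit p r a b (-z)) (star ⇑(phaseSplit p r a b (-z))))) := by
  by_contra! hall
  have key : ∀ z : ℂ, ‖z‖ = 1 → ‖phaseSplit p r a b z j‖ = ‖phaseSplit p r a b (-z) j‖ :=
    fun z hz => by rw [(hall z hz).1.norm_apply, (hall z hz).2.norm_apply]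
  have hx : (Real.sqrt (p / (p + r)) : ℂ) * a j ≠ 0 :=
    mul_ne_zero (Complex.ofReal_ne_zero.2 (Real.sqrt_pos.2 (by positivity)).ne') ha
  have hy : (Real.sqrt (r / (p + r)) : ℂ) * b j ≠ 0 :=
    mul_ne_zero (Complex.ofReal_ne_zero.2 (Real.sqrt_pos.2 (by positivity)).ne') hb
  rcases Complex.eq_zero_or_eq_zero_of_norm_add_eq_norm_sub
    (by simpa [phaseSplit, sub_eq_add_neg, mul_assoc] using key 1 (by simp))
    (by simpa [phaseSplit, sub_eq_add_neg, mul_assoc] using key Complex.I (by simp)) with h | h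
  · exact hx h
  · exact hy h

end PhaseSplit

/-- a non-pure density matrix has a pure-state ensemble decomposition
in which some component is not in S_MCS. -/
theorem mixed_state_has_decomposition_outside_SMCS
    {d : ℕ} (ρ : Matrix (Fin d) (Fin d) ℂ) (hρ : IsDensityMatrix ρ)
    (hpure : ¬ ∃ ψ : Fin d → ℂ, (∑ j, ‖ψ j‖ ^ 2 = 1) ∧
      ρ = Matrix.vecMulVec ψ (star ψ)) :
    ∃ (N : ℕ) (q : Fin N → ℝ) (φ : Fin N → Fin d → ℂ),
      (∀ k, 0 < q k) ∧ (∑ k, q k = 1) ∧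
      (∀ k, ∑ j, ‖φ k j‖ ^ 2 = 1) ∧
      ρ = ∑ k, (q k : ℂ) • Matrix.vecMulVec (φ k) (star (φ k)) ∧
      ∃ k, ¬ InSMCS (Matrix.vecMulVec (φ k) (star (φ k))) := by
  obtain ⟨hpsd, htr⟩ := hρ
  suffices h : ∃ (q : Fin d → ℝ) (φ : Fin d → EuclideanSpace ℂ (Fin d)) (k : Fin d),
      IsPureDecomposition ρ q φ ∧ 0 < q k ∧ ¬ InSMCS (vecMulVec ⇑(φ k) (star ⇑(φ k))) by
    obtain ⟨q, φ, k, hdec, hk, hout⟩ := h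
    exact hdec.exists_fin_ensemble htr (fun ψ => ¬ InSMCS (vecMulVec ψ (star ψ))) hk hout
  set q := hpsd.1.eigenvalues
  set e := hpsd.1.eigenvectorBasis
  have hdec : IsPureDecomposition ρ q e := hpsd.isPureDecomposition_eigen
  obtain ⟨k₁, k₂, hne, hk₁, hk₂⟩ := hdec.exists_two_pos_of_not_pure htr hpure
  by_cases hvanish : ∃ k, 0 < q k ∧ e k k₁ = 0
  · obtain ⟨k, hk, hkj⟩ := hvanish
    exact ⟨q, e, k, hdec, hk, not_inSMCS_of_apply_eq_zero hkj⟩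
  push Not at hvanish
  obtain ⟨z, hz, hout⟩ :=
    exists_phaseSplit_not_inSMCS (hvanish k₁ hk₁) (hvanish k₂ hk₂) hk₁ hk₂
  have hnorm : ∀ w : ℂ, ‖w‖ = 1 → ‖phaseSplit (q k₁) (q k₂) (e k₁) (e k₂) w‖ = 1 :=
    fun w => norm_phaseSplit hk₁ hk₂ (hdec.norm_eq_one k₁) (hdec.norm_eq_one k₂)
      (e.orthonormal.2 hne)
  have hsplit := hdec.update_pair hne (by positivity) (by positivity) (hnorm z hz)
    (hnorm (-z) (by rwa [norm_neg])) (smul_vecMulVec_add_smul_vecMulVec_eq_phaseSplit hk₁ hk₂ hz)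
  have hpos : 0 < (q k₁ + q k₂) / 2 := by positivity
  rcases hout with hout | hout
  · exact ⟨_, _, k₁, hsplit, by simpa [hne] using hpos, by simpa [hne] using hout⟩
  · exact ⟨_, _, k₂, hsplit, by simpa using hpos, by simpa using hout⟩
end
end

section
/- For every d ≥ 3 there exist a unit vector ψ ∈ ℂ^d, real numbers k_0,…,k_{d−1} that are pairwise distinct, and a permutation σ of {0,…,d−1}, such that for K the diagonal matrix with entries k_i and P_σ the permutation matrix of σ (a unitary incoherent operation), the skew information is not preserved: ⟨ψ, K²ψ⟩ − ⟨ψ, Kψ⟩² ≠ ⟨P_σψ, K²P_σψ⟩ − ⟨P_σψ, KP_σψ⟩². Hence the skew information C_skew(·, K) is not invariant under unitary incoherent operations for d ≥ 3. -/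
open Matrix BigOperators
open scoped ComplexOrder

noncomputable section

/-! On the state `(e_a + e_b) / √2` the observable `diag k` has variance `((k_a - k_b) / 2)²`, and
relabelling the state by `σ` turns this into `((k_{σ a} - k_{σ b}) / 2)²`. With `k_j = j`, the
state supported on `{0, 1}` and the transposition `(1 2)`, the variance jumps from `1/4` to `1`. -/

section EvenSuperposition

variable {n : Type*} [DecidableEq n]

def evenSuperposition (a b : n) : n → ℂ :=
  fun j => if j = a ∨ j = b then (((√2)⁻¹ : ℝ) : ℂ) else 0

variable {a b : n}

lemma norm_evenSuperposition_sq (j : n) :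
    ‖evenSuperposition a b j‖ ^ 2 = if j = a ∨ j = b then 1 / 2 else 0 := by
  unfold evenSuperposition
  split_ifs
  · rw [Complex.norm_real, Real.norm_eq_abs, sq_abs, inv_pow, Real.sq_sqrt zero_le_two,
      one_div]
  · simp

lemma evenSuperposition_comp_symm (σ : Equiv.Perm n) :
    (fun i => evenSuperposition a b (σ.symm i)) = evenSuperposition (σ a) (σ b) := by
  ext i
  simp only [evenSuperposition, Equiv.symm_apply_eq]

variable [Fintype n]

lemma sum_norm_evenSuperposition_sq (hab : a ≠ b) :
    ∑ j, ‖evenSuperposition a b j‖ ^ 2 = 1 := by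
  rw [Fintype.sum_eq_add a b hab fun j hj => by simp [norm_evenSuperposition_sq, hj]]
  norm_num [norm_evenSuperposition_sq]

lemma star_dotProduct_diagonal_mulVec (w v : n → ℂ) :
    star v ⬝ᵥ diagonal w *ᵥ v = ∑ j, w j * ((‖v j‖ ^ 2 : ℝ) : ℂ) := by
  simp only [dotProduct, mulVec_diagonal, Pi.star_apply, Complex.ofReal_pow]
  refine Finset.sum_congr rfl fun j _ => ?_
  rw [← Complex.conj_mul', RCLike.star_def]
  ring

lemma star_dotProduct_diagonal_mulVec_evenSuperposition (hab : a ≠ b) (w : n → ℂ) :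
    star (evenSuperposition a b) ⬝ᵥ diagonal w *ᵥ evenSuperposition a b = (w a + w b) / 2 := by
  rw [star_dotProduct_diagonal_mulVec,
    Fintype.sum_eq_add a b hab fun j hj => by simp [norm_evenSuperposition_sq, hj]]
  simp only [norm_evenSuperposition_sq, true_or, or_true, ↓reduceIte]
  push_cast
  ring

def diagonalVariance (k : n → ℝ) (v : n → ℂ) : ℂ :=
  let K : Matrix n n ℂ := diagonal fun i => (k i : ℂ)
  star v ⬝ᵥ (K * K) *ᵥ v - (star v ⬝ᵥ K *ᵥ v) ^ 2

lemma diagonalVariance_evenSuperposition (hab : a ≠ b) (k : n → ℝ) :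
    diagonalVariance k (evenSuperposition a b) = (((k a - k b) / 2 : ℝ) : ℂ) ^ 2 := by
  simp only [diagonalVariance, diagonal_mul_diagonal,
    star_dotProduct_diagonal_mulVec_evenSuperposition hab]
  push_cast
  ring

end EvenSuperposition

/-- for d ≥ 3, skew information (the variance of a diagonal observable
with pairwise distinct entries on a pure state) is not invariant under some
permutation (a unitary incoherent operation). -/
theorem skew_information_not_invariant
    {d : ℕ} (hd : 3 ≤ d) :
    ∃ ψ : Fin d → ℂ, (∑ j, ‖ψ j‖ ^ 2 = 1) ∧
    ∃ k : Fin d → ℝ, Function.Injective k ∧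
    ∃ σ : Equiv.Perm (Fin d),
      let K : Matrix (Fin d) (Fin d) ℂ := Matrix.diagonal fun i => (k i : ℂ)
      let φ : Fin d → ℂ := fun i => ψ (σ.symm i)
      (star ψ) ⬝ᵥ (K * K).mulVec ψ - ((star ψ) ⬝ᵥ K.mulVec ψ) ^ 2 ≠
      (star φ) ⬝ᵥ (K * K).mulVec φ - ((star φ) ⬝ᵥ K.mulVec φ) ^ 2 := by
  let i₀ : Fin d := ⟨0, by omega⟩
  let i₁ : Fin d := ⟨1, by omega⟩
  let i₂ : Fin d := ⟨2, by omega⟩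
  have h₀₁ : i₀ ≠ i₁ := by simp [i₀, i₁, Fin.ext_iff]
  have h₀₂ : i₀ ≠ i₂ := by simp [i₀, i₂, Fin.ext_iff]
  refine ⟨evenSuperposition i₀ i₁, sum_norm_evenSuperposition_sq h₀₁, fun j => (j : ℝ),
    fun i j h => Fin.ext (Nat.cast_injective h), Equiv.swap i₁ i₂, ?_⟩
  show diagonalVariance _ _ ≠ diagonalVariance _ _
  rw [evenSuperposition_comp_symm, Equiv.swap_apply_of_ne_of_ne h₀₁ h₀₂, Equiv.swap_apply_left,
    diagonalVariance_evenSuperposition h₀₁, diagonalVariance_evenSuperposition h₀₂]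
  norm_num [i₀, i₁, i₂]
end
end
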